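/- (Necessity part of the criterion for q > p > 1.) Let Ω ⊆ ℝⁿ be open, let q > p > 1, let C ≥ 0, and let μ be a nonnegative measure on Ω×Ω, locally finite outside the diagonal, such that for every u ∈ C^∞(Ω), ( ∫_Ω ∫_Ω |u(x) − u(y)|^q μ(dx,dy) )^{1/q} ≤ C · ( ∫_Ω |∇u|^p dx )^{1/p}. Then for every pair (F₁,F₂) of disjoint subsets of Ω that are closed in Ω, μ(F₁ × F₂)^{p/q} ≤ C^p · cap_p(F₁,F₂;Ω). -/

import Mathlib

open MeasureTheory Metric Set Filter
open scoped ENNReal Topology MeasureTheory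

noncomputable section

/-- The condenser `p`-capacity
`cap_p(F₁,F₂;Ω) = inf { ∫_Ω |∇u|^p : u ∈ C^∞(Ω), u ≥ 1 on F₁, u ≤ 0 on F₂ }`. -/
def condCap {n : ℕ} (p : ℝ) (F₁ F₂ Ω : Set (EuclideanSpace ℝ (Fin n))) : ℝ≥0∞ :=
  sInf {r : ℝ≥0∞ | ∃ u : EuclideanSpace ℝ (Fin n) → ℝ, ContDiffOn ℝ (⊤ : ℕ∞) u Ω ∧
    (∀ x ∈ F₁, 1 ≤ u x) ∧ (∀ x ∈ F₂, u x ≤ 0) ∧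
    r = ∫⁻ x in Ω, ENNReal.ofReal (‖fderiv ℝ u x‖ ^ p)}

/-! Testing an admissible `u` in the trace inequality gives `|u x - u y| ≥ 1` on `F₁ × F₂`,
hence `μ(F₁ × F₂)^{1/q} ≤ C ‖∇u‖_p`; raising to the power `p` and taking the infimum over `u`
gives the capacity bound. When `C ≤ 0` the inequality forces every coordinate function to
satisfy `x i = y i` for `μ`-a.e. `(x, y) ∈ Ω × Ω`, so `μ` does not charge `F₁ × F₂`. -/

theorem measurableSet_of_inter_closure_subset {X : Type*} [TopologicalSpace X]
    [MeasurableSpace X] [OpensMeasurableSpace X] {Ω F : Set X} (hΩ : MeasurableSet Ω)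
    (hFΩ : F ⊆ Ω) (hF : Ω ∩ closure F ⊆ F) : MeasurableSet F := by
  have hF_eq : Ω ∩ closure F = F := hF.antisymm (subset_inter hFΩ subset_closure)
  exact hF_eq ▸ hΩ.inter isClosed_closure.measurableSet

theorem measure_prod_le_setLIntegral_abs_sub_rpow {X : Type*} [MeasurableSpace X]
    {μ : Measure (X × X)} {S : Set (X × X)} {F₁ F₂ : Set X} {u : X → ℝ} {q : ℝ}
    (hq : 0 ≤ q) (hF₁ : MeasurableSet F₁) (hF₂ : MeasurableSet F₂) (hS : F₁ ×ˢ F₂ ⊆ S)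
    (hu₁ : ∀ x ∈ F₁, 1 ≤ u x) (hu₂ : ∀ y ∈ F₂, u y ≤ 0) :
    μ (F₁ ×ˢ F₂) ≤ ∫⁻ z in S, ENNReal.ofReal (|u z.1 - u z.2| ^ q) ∂μ := by
  have h_one_le : ∀ᵐ z ∂μ.restrict (F₁ ×ˢ F₂), 1 ≤ ENNReal.ofReal (|u z.1 - u z.2| ^ q) := by
    refine ae_restrict_of_forall_mem (hF₁.prod hF₂) fun z ⟨hx, hy⟩ ↦ ?_
    have h_abs : 1 ≤ |u z.1 - u z.2| := by
      rw [abs_of_nonneg] <;> linarith [hu₁ _ hx, hu₂ _ hy]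
    exact ENNReal.one_le_ofReal.2 (Real.one_le_rpow h_abs hq)
  calc μ (F₁ ×ˢ F₂) = ∫⁻ _ in F₁ ×ˢ F₂, 1 ∂μ := (setLIntegral_one _).symm
    _ ≤ ∫⁻ z in F₁ ×ˢ F₂, ENNReal.ofReal (|u z.1 - u z.2| ^ q) ∂μ := lintegral_mono_ae h_one_le
    _ ≤ _ := lintegral_mono' (Measure.restrict_mono hS le_rfl) le_rfl

theorem ENNReal.rpow_div_le_mul_of_rpow_one_div_le {m c E : ℝ≥0∞} {p q : ℝ} (hp : 0 < p)
    (h : m ^ (1 / q) ≤ c * E ^ (1 / p)) : m ^ (p / q) ≤ c ^ p * E := by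
  have h' := ENNReal.rpow_le_rpow h hp.le
  rwa [ENNReal.mul_rpow_of_nonneg _ _ hp.le, ← ENNReal.rpow_mul, ← ENNReal.rpow_mul,
    one_div_mul_cancel hp.ne', ENNReal.rpow_one, one_div_mul_eq_div] at h'

theorem le_mul_condCap {n : ℕ} {p : ℝ} {F₁ F₂ Ω : Set (EuclideanSpace ℝ (Fin n))}
    {a c : ℝ≥0∞} (hc₀ : c ≠ 0) (hc : c ≠ ⊤)
    (h : ∀ u : EuclideanSpace ℝ (Fin n) → ℝ, ContDiffOn ℝ (⊤ : ℕ∞) u Ω →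
      (∀ x ∈ F₁, 1 ≤ u x) → (∀ x ∈ F₂, u x ≤ 0) →
      a ≤ c * ∫⁻ x in Ω, ENNReal.ofReal (‖fderiv ℝ u x‖ ^ p)) :
    a ≤ c * condCap p F₁ F₂ Ω := by
  rw [condCap, sInf_eq_iInf', ENNReal.mul_iInf_of_ne hc₀ hc]
  exact le_iInf fun ⟨_, u, hu, hu₁, hu₂, hr⟩ ↦ hr ▸ h u hu hu₁ hu₂

theorem ae_eq_of_lintegral_abs_sub_rpow_eq_zero {α : Type*} [MeasurableSpace α]
    {ν : Measure α} {f g : α → ℝ} {q : ℝ} (hf : Measurable f) (hg : Measurable g) (hq : q ≠ 0)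
    (h : ∫⁻ z, ENNReal.ofReal (|f z - g z| ^ q) ∂ν = 0) : f =ᵐ[ν] g := by
  have hmeas : Measurable fun z ↦ ENNReal.ofReal (|f z - g z| ^ q) := by fun_prop
  filter_upwards [(lintegral_eq_zero_iff hmeas).1 h] with z hz
  have h_rpow : |f z - g z| ^ q = 0 :=
    (ENNReal.ofReal_eq_zero.1 hz).antisymm (Real.rpow_nonneg (abs_nonneg _) _)
  rw [Real.rpow_eq_zero (abs_nonneg _) hq, abs_eq_zero, sub_eq_zero] at h_rpow
  exact h_rpow

theorem ae_fst_eq_snd_of_forall_lintegral_eq_zero {ι : Type*} [Fintype ι]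
    {ν : Measure (EuclideanSpace ℝ ι × EuclideanSpace ℝ ι)} {q : ℝ} (hq : q ≠ 0)
    (h : ∀ u : EuclideanSpace ℝ ι → ℝ, ContDiff ℝ (⊤ : ℕ∞) u →
      ∫⁻ z, ENNReal.ofReal (|u z.1 - u z.2| ^ q) ∂ν = 0) :
    ∀ᵐ z ∂ν, z.1 = z.2 := by
  have h_coord : ∀ i, ∀ᵐ z ∂ν, z.1 i = z.2 i := fun i ↦
    ae_eq_of_lintegral_abs_sub_rpow_eq_zero (by fun_prop) (by fun_prop) hq
      (h _ (EuclideanSpace.proj (𝕜 := ℝ) i).contDiff)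
  filter_upwards [ae_all_iff.2 h_coord] with z hz
  exact PiLp.ext hz

theorem measure_prod_eq_zero_of_ae_fst_eq_snd {X : Type*} [MeasurableSpace X]
    {μ : Measure (X × X)} {S : Set (X × X)} {F₁ F₂ : Set X} (hS : F₁ ×ˢ F₂ ⊆ S)
    (hF : Disjoint F₁ F₂) (h : ∀ᵐ z ∂μ.restrict S, z.1 = z.2) : μ (F₁ ×ˢ F₂) = 0 := by
  rw [← Measure.restrict_eq_self μ hS]
  exact measure_mono_null (fun z hz ↦ hF.ne_of_mem hz.1 hz.2) (ae_iff.1 h)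

theorem stmt_14_general (n : ℕ) (Ω : Set (EuclideanSpace ℝ (Fin n))) (hΩ : IsOpen Ω)
    (p q : ℝ) (hp : 1 < p) (hpq : p < q) (C : ℝ)
    (μ : Measure (EuclideanSpace ℝ (Fin n) × EuclideanSpace ℝ (Fin n)))
    (hineq : ∀ u : EuclideanSpace ℝ (Fin n) → ℝ, ContDiffOn ℝ (⊤ : ℕ∞) u Ω →
      (∫⁻ z in Ω ×ˢ Ω, ENNReal.ofReal (|u z.1 - u z.2| ^ q) ∂μ) ^ (1 / q) ≤
        ENNReal.ofReal C *
          (∫⁻ x in Ω, ENNReal.ofReal (‖fderiv ℝ u x‖ ^ p)) ^ (1 / p)) :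
    ∀ F₁ F₂ : Set (EuclideanSpace ℝ (Fin n)),
      F₁ ⊆ Ω → Ω ∩ closure F₁ ⊆ F₁ → F₂ ⊆ Ω → Ω ∩ closure F₂ ⊆ F₂ →
      Disjoint F₁ F₂ →
      μ (F₁ ×ˢ F₂) ^ (p / q) ≤ ENNReal.ofReal (C ^ p) * condCap p F₁ F₂ Ω := by
  intro F₁ F₂ hF₁Ω hF₁ hF₂Ω hF₂ hdisj
  have hp₀ : 0 < p := by linarith
  have hq₀ : 0 < q := by linarith
  have hF_sub : F₁ ×ˢ F₂ ⊆ Ω ×ˢ Ω := prod_mono hF₁Ω hF₂Ω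
  rcases le_or_gt C 0 with hC | hC
  · have hdiag : ∀ᵐ z ∂μ.restrict (Ω ×ˢ Ω), z.1 = z.2 :=
      ae_fst_eq_snd_of_forall_lintegral_eq_zero hq₀.ne' fun u hu ↦ by
        simpa [ENNReal.ofReal_of_nonpos hC, hq₀, hq₀.not_gt] using hineq u hu.contDiffOn
    rw [measure_prod_eq_zero_of_ae_fst_eq_snd hF_sub hdisj hdiag,
      ENNReal.zero_rpow_of_pos (by positivity)]
    exact zero_le
  · refine le_mul_condCap (by simpa using Real.rpow_pos_of_pos hC p) ENNReal.ofReal_ne_top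
      fun u hu hu₁ hu₂ ↦ ?_
    rw [← ENNReal.ofReal_rpow_of_nonneg hC.le hp₀.le]
    have hμ_le := measure_prod_le_setLIntegral_abs_sub_rpow (μ := μ) hq₀.le
      (measurableSet_of_inter_closure_subset hΩ.measurableSet hF₁Ω hF₁)
      (measurableSet_of_inter_closure_subset hΩ.measurableSet hF₂Ω hF₂) hF_sub hu₁ hu₂
    exact ENNReal.rpow_div_le_mul_of_rpow_one_div_le hp₀
      ((ENNReal.rpow_le_rpow hμ_le (by positivity)).trans (hineq u hu))

/-- necessity, `q > p > 1`: if
`(∬_{Ω×Ω} |u(x)−u(y)|^q dμ)^{1/q} ≤ C·‖∇u‖_{L^p(Ω)}` for every `u ∈ C^∞(Ω)`, then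
`μ(F₁×F₂)^{p/q} ≤ C^p·cap_p(F₁,F₂;Ω)` for all disjoint sets closed in `Ω`. -/
theorem stmt_14 (n : ℕ) (Ω : Set (EuclideanSpace ℝ (Fin n))) (hΩ : IsOpen Ω)
    (p q : ℝ) (hp : 1 < p) (hpq : p < q) (C : ℝ) (hC : 0 ≤ C)
    (μ : Measure (EuclideanSpace ℝ (Fin n) × EuclideanSpace ℝ (Fin n)))
    -- `μ` is locally finite outside the diagonal
    (hloc : ∀ K : Set (EuclideanSpace ℝ (Fin n) × EuclideanSpace ℝ (Fin n)),
      IsCompact K → (∀ z ∈ K, z.1 ≠ z.2) → μ K < ⊤)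
    (hineq : ∀ u : EuclideanSpace ℝ (Fin n) → ℝ, ContDiffOn ℝ (⊤ : ℕ∞) u Ω →
      (∫⁻ z in Ω ×ˢ Ω, ENNReal.ofReal (|u z.1 - u z.2| ^ q) ∂μ) ^ (1 / q) ≤
        ENNReal.ofReal C *
          (∫⁻ x in Ω, ENNReal.ofReal (‖fderiv ℝ u x‖ ^ p)) ^ (1 / p)) :
    ∀ F₁ F₂ : Set (EuclideanSpace ℝ (Fin n)),
      F₁ ⊆ Ω → Ω ∩ closure F₁ ⊆ F₁ → F₂ ⊆ Ω → Ω ∩ closure F₂ ⊆ F₂ →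
      Disjoint F₁ F₂ →
      μ (F₁ ×ˢ F₂) ^ (p / q) ≤ ENNReal.ofReal (C ^ p) * condCap p F₁ F₂ Ω :=
  stmt_14_general n Ω hΩ p q hp hpq C μ hineq
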